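/- Let m ≥ 3 be an integer, let η > 0, ρ ∈ (0, 1], and θ, ϑ ∈ ℝ be such that ρe^{iθ} ∈ 𝒫_m. If R is a real number with R ≥ 2^{7/2} η, then the real sequence t_k := R + 2η ρ^{k−1} cos((k−1)θ + ϑ) (k ≥ 1) admits a positive realization of dimension m. (This follows from the bound R ≥ 2^{5/2}η/cos(π/m) because cos(π/m) ≥ 1/2 for every m ≥ 3.) -/

import Mathlib

open Matrix

/-- A positive realization of dimension `M` of a real sequence `t` (relevant for `k ≥ 1`):
a triple `(A, b, c)` with all entries nonnegative such that `t k = cᵀ A^(k-1) b` for `k ≥ 1`. -/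
def IsPosRealization (M : ℕ) (A : Matrix (Fin M) (Fin M) ℝ)
    (b c : Fin M → ℝ) (t : ℕ → ℝ) : Prop :=
  (∀ i j, 0 ≤ A i j) ∧ (∀ i, 0 ≤ b i) ∧ (∀ i, 0 ≤ c i) ∧
    ∀ k : ℕ, 1 ≤ k → t k = c ⬝ᵥ (A ^ (k - 1)).mulVec b

/-- Membership in `𝒫_m`, the open regular `m`-gon with vertices at the `m`-th roots of unity:
`ρe^{iθ} ∈ 𝒫_m` iff `ρ cos((2k+1)π/m − θ) < cos(π/m)` for all `k = 0, …, m−1`.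
Since `Re (z · e^{-iα}) = ρ cos(α − θ)` for `z = ρe^{iθ}`, this is expressed as below. -/
def memP (m : ℕ) (z : ℂ) : Prop :=
  ∀ k : ℕ, k < m →
    (z * Complex.exp (-((((2 * k + 1) * Real.pi / m : ℝ) : ℂ) * Complex.I))).re
      < Real.cos (Real.pi / m)


noncomputable def zeta (m : ℕ) : ℂ := Complex.exp ((2*Real.pi/m : ℝ) * Complex.I)

lemma zeta_pow_m (m : ℕ) (hm : 0 < m) : zeta m ^ m = 1 := by
  rw [zeta, ← Complex.exp_nat_mul]
  have : (m:ℂ) * ((2*Real.pi/m : ℝ) * Complex.I) = (1:ℤ) * (2*Real.pi*Complex.I) := by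
    have hm' : (m:ℂ) ≠ 0 := Nat.cast_ne_zero.2 hm.ne'
    push_cast
    field_simp
  rw [this, Complex.exp_int_mul_two_pi_mul_I]

lemma zeta_pow_mod (m : ℕ) (hm : 0 < m) (a : ℕ) : zeta m ^ (a % m) = zeta m ^ a := by
  conv_rhs => rw [← Nat.div_add_mod a m]
  rw [pow_add, pow_mul, zeta_pow_m m hm, one_pow, one_mul]

lemma zeta_ne_one (m : ℕ) (hm : 3 ≤ m) : zeta m ≠ 1 := by
  rw [zeta]
  intro hone
  rw [Complex.exp_eq_one_iff] at hone
  obtain ⟨n, h⟩ := hone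
  have hπ := Real.pi_pos
  have hm' : (0:ℝ) < m := by positivity
  have h1 : ((2*Real.pi/m : ℝ) : ℂ) * Complex.I = ((2*Real.pi/m : ℝ)) * Complex.I := rfl
  have h2 : (n : ℂ) * (2 * Real.pi * Complex.I) = ((n * (2*Real.pi) : ℝ)) * Complex.I := by push_cast; ring
  rw [h2] at h
  have h3 : (2*Real.pi/m : ℝ) = n * (2*Real.pi) := by
    have := Complex.ofReal_inj.1 (mul_right_cancel₀ Complex.I_ne_zero h)
    exact this
  rw [div_eq_iff hm'.ne'] at h3
  have hn : (n:ℝ) * m = 1 := by nlinarith [Real.pi_pos]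
  have hm3 : (3:ℝ) ≤ m := by exact_mod_cast hm
  rcases le_or_gt n 0 with hle | hlt
  · have : (n:ℝ) ≤ 0 := by exact_mod_cast hle
    nlinarith
  · have : (1:ℝ) ≤ n := by exact_mod_cast hlt
    nlinarith

lemma zeta_sq_ne_one (m : ℕ) (hm : 3 ≤ m) : zeta m ^ 2 ≠ 1 := by
  rw [zeta, ← Complex.exp_nat_mul]
  intro hone
  rw [Complex.exp_eq_one_iff] at hone
  obtain ⟨n, h⟩ := hone
  have hm' : (0:ℝ) < m := by positivity
  have h2 : (n : ℂ) * (2 * Real.pi * Complex.I) = ((n * (2*Real.pi) : ℝ)) * Complex.I := by push_cast; ring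
  have h1 : ((2:ℕ):ℂ) * (((2*Real.pi/m : ℝ)) * Complex.I) = ((2*(2*Real.pi/m) : ℝ)) * Complex.I := by push_cast; ring
  rw [h1, h2] at h
  have h3 : (2*(2*Real.pi/m) : ℝ) = n * (2*Real.pi) := by
    exact_mod_cast Complex.ofReal_inj.1 (mul_right_cancel₀ Complex.I_ne_zero h)
  have h3' : 2 * (2 * Real.pi) = (n:ℝ) * (2 * Real.pi) * m := by
    field_simp at h3
    linear_combination (2*Real.pi) * h3
  have hn : (n:ℝ) * m = 2 := by nlinarith [Real.pi_pos]
  have hm3 : (3:ℝ) ≤ m := by exact_mod_cast hm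
  rcases le_or_gt n 0 with hle | hlt
  · have : (n:ℝ) ≤ 0 := by exact_mod_cast hle
    nlinarith
  · have : (1:ℝ) ≤ n := by exact_mod_cast hlt
    nlinarith

lemma sum_zeta (m : ℕ) (hm : 3 ≤ m) : ∑ j : Fin m, zeta m ^ (j:ℕ) = 0 := by
  rw [Fin.sum_univ_eq_sum_range (fun j => zeta m ^ j)]
  rw [geom_sum_eq (zeta_ne_one m hm)]
  rw [zeta_pow_m m (by omega)]
  simp

lemma sum_zeta_sq (m : ℕ) (hm : 3 ≤ m) : ∑ j : Fin m, zeta m ^ (2*(j:ℕ)) = 0 := by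
  have : ∀ j : ℕ, zeta m ^ (2*j) = (zeta m ^ 2) ^ j := fun j => by rw [pow_mul]
  simp_rw [this]
  rw [Fin.sum_univ_eq_sum_range (fun j => (zeta m ^2) ^ j)]
  rw [geom_sum_eq (zeta_sq_ne_one m hm), ← pow_mul, mul_comm 2 m, pow_mul, zeta_pow_m m (by omega)]
  simp


lemma sin_plus_sin (α φ : ℝ) :
    Real.sin (α - φ) + Real.sin φ = 2 * Real.sin (α/2) * Real.cos (α/2 - φ) := by
  have s1 : Real.sin (α - φ) = Real.sin (α/2) * Real.cos (α/2 - φ)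
      + Real.cos (α/2) * Real.sin (α/2 - φ) := by
    rw [show α - φ = α/2 + (α/2 - φ) by ring, Real.sin_add]
  have s2 : Real.sin φ = Real.sin (α/2) * Real.cos (α/2 - φ)
      - Real.cos (α/2) * Real.sin (α/2 - φ) := by
    conv_lhs => rw [show φ = α/2 - (α/2 - φ) by ring]
    rw [Real.sin_sub]
  rw [s1, s2]; ring

set_option maxHeartbeats 1000000 in
lemma decomp (m : ℕ) (hm : 3 ≤ m) (ρ θ : ℝ) (hρ : 0 < ρ)
    (hpoly : memP m ((ρ:ℂ) * Complex.exp ((θ:ℂ) * Complex.I))) :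
    ∃ lam : Fin m → ℝ, (∀ j, 0 ≤ lam j) ∧ (∑ j, lam j) = 1 ∧
      (∑ j : Fin m, (lam j : ℂ) * zeta m ^ (j:ℕ))
        = (ρ:ℂ) * Complex.exp ((θ:ℂ) * Complex.I) := by
  have hπ := Real.pi_pos
  have hm0 : 0 < m := by omega
  haveI : NeZero m := ⟨by omega⟩
  have hm' : (0:ℝ) < m := by positivity
  have hm3 : (3:ℝ) ≤ m := by exact_mod_cast hm
  obtain ⟨α, hα_def⟩ : ∃ x : ℝ, x = 2*Real.pi/m := ⟨_, rfl⟩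
  have hα : 0 < α := by rw [hα_def]; positivity
  have hαle : α ≤ 2*Real.pi/3 := by
    rw [hα_def]
    apply div_le_div_of_nonneg_left (by positivity) (by norm_num) hm3
  have hαπ : α < Real.pi := by nlinarith
  obtain ⟨k0, hk0_def⟩ : ∃ x : ℤ, x = ⌊θ/α⌋ := ⟨_, rfl⟩
  obtain ⟨φ, hφ_def⟩ : ∃ x : ℝ, x = θ - k0*α := ⟨_, rfl⟩
  have hφ0 : 0 ≤ φ := by
    have h1 : (k0:ℝ) * α ≤ θ := by
      rw [hk0_def]
      calc (⌊θ/α⌋:ℝ) * α ≤ (θ/α) * α := by nlinarith [Int.floor_le (θ/α)]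
        _ = θ := by field_simp
    simp only [hφ_def]; linarith
  have hφα : φ < α := by
    have h1 : θ/α < (k0:ℝ) + 1 := by
      rw [hk0_def]; exact_mod_cast Int.lt_floor_add_one (θ/α)
    have h2 : θ < ((k0:ℝ)+1)*α := by
      calc θ = (θ/α)*α := by field_simp
        _ < ((k0:ℝ)+1)*α := by nlinarith
    simp only [hφ_def]; nlinarith
  obtain ⟨q, hq_def⟩ : ∃ x : ℤ, x = k0 / m := ⟨_, rfl⟩
  obtain ⟨r, hr_def⟩ : ∃ x : ℤ, x = k0 % m := ⟨_, rfl⟩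
  have hr0 : 0 ≤ r := hr_def ▸ Int.emod_nonneg k0 (by exact_mod_cast hm0.ne')
  have hrm : r < m := hr_def ▸ Int.emod_lt_of_pos k0 (by exact_mod_cast hm0)
  obtain ⟨k, hk_def⟩ : ∃ x : Fin m, x = (⟨r.toNat, by omega⟩ : Fin m) := ⟨_, rfl⟩
  have hkr : ((k:ℕ):ℝ) = (r:ℝ) := by
    have := Int.toNat_of_nonneg hr0
    rw [hk_def]
    exact_mod_cast congrArg (Int.cast : ℤ → ℝ) this
  have hk0eq : (k0:ℝ) = m*q + r := by
    rw [hq_def, hr_def]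
    exact_mod_cast congrArg (Int.cast : ℤ → ℝ) (Int.mul_ediv_add_emod k0 m).symm
  have hmα : (m:ℝ)*α = 2*Real.pi := by rw [hα_def]; field_simp
  have hθeq : θ = 2*Real.pi*q + (k:ℕ)*α + φ := by
    have h1 : θ = (k0:ℝ)*α + φ := by simp only [hφ_def]; ring
    rw [h1, hk0eq, hkr, add_mul, show (m:ℝ)*↑q*α = (m:ℝ)*α*↑q by ring, hmα]
  have hexpθ : Complex.exp ((θ:ℂ) * Complex.I)
      = Complex.exp ((((k:ℕ)*α + φ : ℝ):ℂ) * Complex.I) := by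
    conv_lhs => rw [show (θ:ℂ) = ((2*Real.pi*q + ((k:ℕ)*α + φ) : ℝ):ℂ) by
      rw [hθeq]; push_cast; ring]
    rw [show (((2*Real.pi*q + ((k:ℕ)*α + φ) : ℝ)):ℂ) * Complex.I
        = (q:ℂ) * (2*Real.pi*Complex.I) + (((k:ℕ)*α + φ : ℝ):ℂ) * Complex.I by
      push_cast; ring]
    rw [Complex.exp_add, Complex.exp_int_mul_two_pi_mul_I, one_mul]
  have hsinα : 0 < Real.sin α := Real.sin_pos_of_pos_of_lt_pi hα hαπ
  obtain ⟨a, ha_def⟩ : ∃ x : ℝ, x = ρ * Real.sin (α - φ) / Real.sin α := ⟨_, rfl⟩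
  obtain ⟨b, hb_def⟩ : ∃ x : ℝ, x = ρ * Real.sin φ / Real.sin α := ⟨_, rfl⟩
  have ha0 : 0 ≤ a := by
    rw [ha_def]
    apply div_nonneg _ hsinα.le
    have : 0 ≤ Real.sin (α - φ) :=
      Real.sin_nonneg_of_nonneg_of_le_pi (by linarith) (by linarith)
    positivity
  have hb0 : 0 ≤ b := by
    rw [hb_def]
    apply div_nonneg _ hsinα.le
    have : 0 ≤ Real.sin φ :=
      Real.sin_nonneg_of_nonneg_of_le_pi hφ0 (by linarith)
    positivity
  have hz_re : (zeta m).re = Real.cos α := by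
    rw [zeta, ← hα_def, Complex.exp_ofReal_mul_I_re]
  have hz_im : (zeta m).im = Real.sin α := by
    rw [zeta, ← hα_def, Complex.exp_ofReal_mul_I_im]
  have hkey : (a:ℂ) + (b:ℂ) * zeta m = (ρ:ℂ) * Complex.exp ((φ:ℂ) * Complex.I) := by
    apply Complex.ext
    · simp only [Complex.add_re, Complex.mul_re, Complex.ofReal_re, Complex.ofReal_im,
        hz_re, hz_im, Complex.exp_ofReal_mul_I_re, Complex.exp_ofReal_mul_I_im,
        zero_mul, sub_zero, mul_zero, zero_sub]
      rw [ha_def, hb_def, Real.sin_sub]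
      field_simp
      ring
    · simp only [Complex.add_im, Complex.mul_im, Complex.ofReal_re, Complex.ofReal_im,
        hz_re, hz_im, Complex.exp_ofReal_mul_I_re, Complex.exp_ofReal_mul_I_im,
        zero_mul, zero_add, add_zero, mul_zero]
      rw [hb_def]
      field_simp
  have hcoshalf : 0 < Real.cos (α/2) := by
    apply Real.cos_pos_of_mem_Ioo
    constructor <;> nlinarith
  have hab1 : a + b < 1 := by
    have hp := hpoly (k:ℕ) k.isLt
    have hx : ((2*((k:ℕ):ℝ)+1) * Real.pi / m : ℝ) = (k:ℕ)*α + α/2 := by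
      rw [hα_def]; field_simp
    have hzz : (ρ:ℂ) * Complex.exp ((θ:ℂ) * Complex.I) *
        Complex.exp (-((((2*((k:ℕ):ℝ)+1) * Real.pi / m : ℝ):ℂ) * Complex.I))
        = (ρ:ℂ) * Complex.exp (((φ - α/2 : ℝ):ℂ) * Complex.I) := by
      rw [hexpθ, hx, mul_assoc, ← Complex.exp_add]
      congr 2
      push_cast
      ring
    rw [hzz] at hp
    have hre : ((ρ:ℂ) * Complex.exp (((φ - α/2 : ℝ):ℂ) * Complex.I)).re
        = ρ * Real.cos (φ - α/2) := by
      simp only [Complex.mul_re, Complex.ofReal_re, Complex.ofReal_im,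
        Complex.exp_ofReal_mul_I_re, Complex.exp_ofReal_mul_I_im, zero_mul, sub_zero]
    rw [hre] at hp
    have hπm : Real.pi / m = α/2 := by rw [hα_def]; ring
    rw [hπm] at hp
    have hsum : a + b = ρ * Real.cos (φ - α/2) / Real.cos (α/2) := by
      rw [ha_def, hb_def]
      have h1 := sin_plus_sin α φ
      have h2 : Real.sin α = 2 * Real.sin (α/2) * Real.cos (α/2) := by
        rw [show α = 2*(α/2) by ring, Real.sin_two_mul]
        ring_nf
      have hsinhalf : 0 < Real.sin (α/2) := by
        apply Real.sin_pos_of_pos_of_lt_pi <;> nlinarith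
      have h3 : Real.cos (α/2 - φ) = Real.cos (φ - α/2) := by
        rw [← Real.cos_neg (α/2 - φ)]; ring_nf
      rw [← add_div, ← mul_add, h1, h3, h2]
      field_simp
    rw [hsum, div_lt_one hcoshalf]
    exact hp
  obtain ⟨lam, hlam_def⟩ : ∃ x : Fin m → ℝ, x = fun j =>
    (1 - (a+b))/m + (if j = k then a else 0) + (if j = k+1 then b else 0) := ⟨_, rfl⟩
  have hζk : Complex.exp ((((k:ℕ)*α + φ : ℝ):ℂ) * Complex.I)
      = Complex.exp ((φ:ℂ) * Complex.I) * zeta m ^ (k:ℕ) := by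
    rw [zeta, ← hα_def, ← Complex.exp_nat_mul, ← Complex.exp_add]
    congr 1
    push_cast
    ring
  refine ⟨lam, ?_, ?_, ?_⟩
  · intro j
    have h0 : 0 < 1 - (a+b) := by linarith
    have h1 : 0 < (1 - (a+b))/m := by positivity
    simp only [hlam_def]
    split_ifs <;> linarith
  · simp only [hlam_def]
    rw [Finset.sum_add_distrib, Finset.sum_add_distrib]
    rw [Finset.sum_ite_eq' Finset.univ k (fun _ => a),
        Finset.sum_ite_eq' Finset.univ (k+1) (fun _ => b)]
    simp only [Finset.sum_const, Finset.card_univ, Fintype.card_fin, nsmul_eq_mul,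
      Finset.mem_univ, if_true]
    field_simp
    ring
  · simp only [hlam_def]
    push_cast
    simp_rw [apply_ite (fun x : ℝ => (x:ℂ)), Complex.ofReal_zero, add_mul,
      Finset.sum_add_distrib]
    have e1 : ∑ j : Fin m, ((1 - ((a:ℂ)+b))/m) * zeta m ^ (j:ℕ) = 0 := by
      rw [← Finset.mul_sum, sum_zeta m hm, mul_zero]
    have e2 : ∑ j : Fin m, (if j = k then (a:ℂ) else 0) * zeta m ^ (j:ℕ)
        = (a:ℂ) * zeta m ^ (k:ℕ) := by
      rw [Finset.sum_eq_single k]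
      · simp
      · intro j _ hj; simp [hj]
      · simp
    have e3 : ∑ j : Fin m, (if j = k+1 then (b:ℂ) else 0) * zeta m ^ (j:ℕ)
        = (b:ℂ) * zeta m ^ (((k+1 : Fin m)):ℕ) := by
      rw [Finset.sum_eq_single (k+1)]
      · simp
      · intro j _ hj; simp [hj]
      · simp
    have h1v : ((1 : Fin m) : ℕ) = 1 := by
      simp [Fin.val_one', Nat.mod_eq_of_lt (show 1 < m by omega)]
    have e4 : zeta m ^ (((k+1 : Fin m)):ℕ) = zeta m ^ ((k:ℕ)+1) := by
      rw [Fin.val_add, h1v, zeta_pow_mod m hm0]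
    rw [e1, e2, e3, e4, zero_add, hexpθ, hζk]
    linear_combination (zeta m ^ (k:ℕ)) * hkey

lemma re_mul_re (u v : ℂ) : u.re * v.re = ((u*v).re + ((starRingEnd ℂ) u * v).re)/2 := by
  simp [Complex.mul_re, Complex.conj_re, Complex.conj_im]


set_option maxHeartbeats 1000000 in
/-- Uniform version: if `ρe^{iθ} ∈ 𝒫_m` and `R ≥ 2^{7/2} η`, then the impulse response
`t_k = R + 2ηρ^{k−1}cos((k−1)θ + ϑ)` admits an `m`-dimensional positive realization
(this works for all `m ≥ 3` since `cos(π/m) ≥ 1/2`). -/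
theorem complex_pair_positive_realization_uniform
    (m : ℕ) (hm : 3 ≤ m) (η ρ θ ϑ R : ℝ)
    (hη : 0 < η) (hρ : 0 < ρ) (hρ1 : ρ ≤ 1)
    (hpoly : memP m ((ρ : ℂ) * Complex.exp ((θ : ℂ) * Complex.I)))
    (hR : (2 : ℝ) ^ ((7 : ℝ) / 2) * η ≤ R)
    (t : ℕ → ℝ)
    (ht : ∀ k : ℕ, 1 ≤ k →
      t k = R + 2 * η * ρ ^ (k - 1) * Real.cos ((k - 1 : ℕ) * θ + ϑ)) :
    ∃ (A : Matrix (Fin m) (Fin m) ℝ) (b c : Fin m → ℝ),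
      IsPosRealization m A b c t := by
  have hm0 : 0 < m := by omega
  haveI : NeZero m := ⟨by omega⟩
  have hm' : (0:ℝ) < m := by positivity
  obtain ⟨lam, hlam0, hlam1, hlamz⟩ := decomp m hm ρ θ hρ hpoly
  set z : ℂ := (ρ:ℂ) * Complex.exp ((θ:ℂ) * Complex.I) with hz_def
  -- R ≥ 8η
  have hR8 : 8*η ≤ R := by
    have h1 : (8:ℝ) ≤ (2:ℝ) ^ ((7:ℝ)/2) := by
      have h2 : (2:ℝ) ^ ((3:ℝ)) ≤ (2:ℝ) ^ ((7:ℝ)/2) :=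
        Real.rpow_le_rpow_of_exponent_le (by norm_num) (by norm_num)
      have h3 : (2:ℝ) ^ ((3:ℝ)) = 8 := by
        rw [show ((3:ℝ)) = ((3:ℕ):ℝ) by norm_num, Real.rpow_natCast]
        norm_num
      linarith
    nlinarith
  have hR0 : 0 ≤ R := by nlinarith
  -- parameters
  obtain ⟨p, hp_def⟩ : ∃ x : ℝ, x = Real.sqrt (R/m) := ⟨_, rfl⟩
  obtain ⟨s, hs_def⟩ : ∃ x : ℝ, x = Real.sqrt (4*η/m) := ⟨_, rfl⟩
  have hp0 : 0 ≤ p := hp_def ▸ Real.sqrt_nonneg _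
  have hs0 : 0 ≤ s := hs_def ▸ Real.sqrt_nonneg _
  have hps : s ≤ p := by
    rw [hp_def, hs_def]
    apply Real.sqrt_le_sqrt
    gcongr
    linarith
  have hp2 : p^2 = R/m := by rw [hp_def]; exact Real.sq_sqrt (by positivity)
  have hs2 : s^2 = 4*η/m := by rw [hs_def]; exact Real.sq_sqrt (by positivity)
  set δ : ℂ := (s:ℂ) * Complex.exp ((ϑ:ℂ) * Complex.I) with hδ_def
  set A : Matrix (Fin m) (Fin m) ℝ := Matrix.of (fun i j => lam (j - i)) with hA_def
  set b : Fin m → ℝ := fun i : Fin m => p + ((s:ℂ) * zeta m ^ (i:ℕ)).re with hb_def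
  set c : Fin m → ℝ := fun i : Fin m => p + (δ * (starRingEnd ℂ) (zeta m ^ (i:ℕ))).re with hc_def
  have habs : ∀ n : ℕ, ‖zeta m ^ n‖ = 1 := by
    intro n
    rw [norm_pow, zeta, Complex.norm_exp_ofReal_mul_I, one_pow]
  have habsδ : ‖δ‖ = s := by
    rw [hδ_def, norm_mul, Complex.norm_real, Complex.norm_exp_ofReal_mul_I,
      mul_one, Real.norm_of_nonneg hs0]
  -- row sums
  have S0 : ∀ i : Fin m, ∑ j : Fin m, lam (j - i) = 1 := by
    intro i
    rw [← hlam1]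
    exact Fintype.sum_equiv (Equiv.subRight i) _ _ (fun j => rfl)
  have S1 : ∀ i : Fin m, ∑ j : Fin m, (lam (j - i) : ℂ) * zeta m ^ (j:ℕ)
      = z * zeta m ^ (i:ℕ) := by
    intro i
    have h1 : ∑ j : Fin m, (lam (j - i) : ℂ) * zeta m ^ (j:ℕ)
        = ∑ d : Fin m, (lam d : ℂ) * zeta m ^ (((d + i : Fin m)):ℕ) := by
      apply Fintype.sum_equiv (Equiv.subRight i)
      intro x
      have hx : (x - i) + i = x := sub_add_cancel x i
      simp only [Equiv.subRight_apply, hx]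
    rw [h1]
    have h2 : ∀ d : Fin m, zeta m ^ (((d + i : Fin m)):ℕ)
        = zeta m ^ (d:ℕ) * zeta m ^ (i:ℕ) := by
      intro d
      rw [Fin.val_add, zeta_pow_mod m hm0, pow_add]
    simp_rw [h2, ← mul_assoc, ← Finset.sum_mul, hlamz]
  -- one step
  have hstep : ∀ w : ℂ, A.mulVec (fun i : Fin m => p + (w * zeta m ^ (i:ℕ)).re)
      = fun i : Fin m => p + ((w * z) * zeta m ^ (i:ℕ)).re := by
    intro w
    funext i
    show ∑ j, A i j * (p + (w * zeta m ^ (j:ℕ)).re) = _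
    simp only [hA_def, Matrix.of_apply]
    simp_rw [mul_add, Finset.sum_add_distrib, ← Finset.sum_mul, S0 i, one_mul]
    congr 1
    have h3 : ∀ j : Fin m, lam (j - i) * (w * zeta m ^ (j:ℕ)).re
        = (((lam (j-i) : ℝ):ℂ) * (w * zeta m ^ (j:ℕ))).re := by
      intro j
      rw [Complex.re_ofReal_mul]
    simp_rw [h3, ← Complex.re_sum]
    have h4 : ∑ j : Fin m, ((lam (j - i):ℝ):ℂ) * (w * zeta m ^ (j:ℕ))
        = (w * z) * zeta m ^ (i:ℕ) := by
      calc ∑ j : Fin m, ((lam (j - i):ℝ):ℂ) * (w * zeta m ^ (j:ℕ))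
          = w * ∑ j : Fin m, ((lam (j - i):ℝ):ℂ) * zeta m ^ (j:ℕ) := by
            rw [Finset.mul_sum]
            exact Finset.sum_congr rfl (fun j _ => by ring)
        _ = w * (z * zeta m ^ (i:ℕ)) := by rw [S1 i]
        _ = (w * z) * zeta m ^ (i:ℕ) := by ring
    rw [h4]
  -- powers
  have hpow : ∀ n : ℕ, (A^n).mulVec b
      = fun i : Fin m => p + (((s:ℂ) * z^n) * zeta m ^ (i:ℕ)).re := by
    intro n
    induction n with
    | zero =>
      rw [pow_zero, Matrix.one_mulVec, hb_def]
      funext i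
      simp
    | succ n ih =>
      rw [pow_succ', ← Matrix.mulVec_mulVec, ih, hstep]
      funext i
      rw [pow_succ]
      ring_nf
  -- conj facts
  have hconj : ∀ i : Fin m, (starRingEnd ℂ) (zeta m ^ (i:ℕ)) * zeta m ^ (i:ℕ) = 1 := by
    intro i
    rw [mul_comm, Complex.mul_conj, Complex.normSq_eq_norm_sq, habs]
    norm_num
  -- final dot product
  have hdot : ∀ n : ℕ, c ⬝ᵥ (fun i : Fin m => p + (((s:ℂ) * z^n) * zeta m ^ (i:ℕ)).re)
      = R + 2*η*ρ^n*Real.cos (n*θ+ϑ) := by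
    intro n
    obtain ⟨w, hw_def⟩ : ∃ x : ℂ, x = (s:ℂ) * z^n := ⟨_, rfl⟩
    rw [← hw_def]
    show ∑ i, c i * (p + (w * zeta m ^ (i:ℕ)).re) = _
    simp only [hc_def]
    have hexpand : ∀ i : Fin m,
        (p + (δ * (starRingEnd ℂ) (zeta m ^ (i:ℕ))).re) * (p + (w * zeta m ^ (i:ℕ)).re)
        = p*p + p*(w * zeta m ^ (i:ℕ)).re + p*(δ * (starRingEnd ℂ) (zeta m ^ (i:ℕ))).re
          + ((δ * w).re + (((starRingEnd ℂ) δ * w) * zeta m ^ (2*(i:ℕ))).re)/2 := by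
      intro i
      have h5 := re_mul_re (δ * (starRingEnd ℂ) (zeta m ^ (i:ℕ))) (w * zeta m ^ (i:ℕ))
      have h6 : (δ * (starRingEnd ℂ) (zeta m ^ (i:ℕ))) * (w * zeta m ^ (i:ℕ)) = δ * w := by
        calc (δ * (starRingEnd ℂ) (zeta m ^ (i:ℕ))) * (w * zeta m ^ (i:ℕ))
            = (δ * w) * ((starRingEnd ℂ) (zeta m ^ (i:ℕ)) * zeta m ^ (i:ℕ)) := by ring
          _ = δ * w := by rw [hconj i, mul_one]
      have h7 : (starRingEnd ℂ) (δ * (starRingEnd ℂ) (zeta m ^ (i:ℕ)))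
            * (w * zeta m ^ (i:ℕ)) = ((starRingEnd ℂ) δ * w) * zeta m ^ (2*(i:ℕ)) := by
        rw [_root_.map_mul, Complex.conj_conj]
        rw [two_mul, pow_add]
        ring
      rw [h6, h7] at h5
      linear_combination h5
    simp_rw [hexpand, Finset.sum_add_distrib]
    have T1 : ∑ _i : Fin m, p*p = R := by
      rw [Finset.sum_const, Finset.card_univ, Fintype.card_fin, nsmul_eq_mul]
      have : p*p = R/m := by nlinarith [hp2]
      rw [this]
      field_simp
    have T2 : ∑ i : Fin m, p*(w * zeta m ^ (i:ℕ)).re = 0 := by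
      simp_rw [← Finset.mul_sum, ← Complex.re_sum, ← Finset.mul_sum, sum_zeta m hm,
        mul_zero, Complex.zero_re, mul_zero]
    have T3 : ∑ i : Fin m, p*(δ * (starRingEnd ℂ) (zeta m ^ (i:ℕ))).re = 0 := by
      have : ∑ i : Fin m, (δ * (starRingEnd ℂ) (zeta m ^ (i:ℕ))).re
          = (δ * (starRingEnd ℂ) (∑ i : Fin m, zeta m ^ (i:ℕ))).re := by
        rw [map_sum, Finset.mul_sum, Complex.re_sum]
      rw [← Finset.mul_sum, this, sum_zeta m hm, map_zero, mul_zero, Complex.zero_re,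
        mul_zero]
    have T4 : ∑ i : Fin m, ((δ * w).re
          + (((starRingEnd ℂ) δ * w) * zeta m ^ (2*(i:ℕ))).re)/2
        = m * (δ*w).re / 2 := by
      simp_rw [add_div, Finset.sum_add_distrib]
      rw [Finset.sum_const, Finset.card_univ, Fintype.card_fin, nsmul_eq_mul]
      have h8 : ∑ i : Fin m, (((starRingEnd ℂ) δ * w) * zeta m ^ (2*(i:ℕ))).re/2
          = ((((starRingEnd ℂ) δ * w) * ∑ i : Fin m, zeta m ^ (2*(i:ℕ))).re)/2 := by
        rw [Finset.mul_sum, Complex.re_sum, ← Finset.sum_div]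
      rw [h8, sum_zeta_sq m hm, mul_zero, Complex.zero_re, zero_div, add_zero]
      ring
    rw [T1, T2, T3, T4, add_zero, add_zero]
    -- now the oscillating part
    have hzn : Complex.exp ((ϑ:ℂ)*Complex.I) * z^n
        = ((ρ^n : ℝ):ℂ) * Complex.exp ((((n:ℝ)*θ+ϑ : ℝ):ℂ) * Complex.I) := by
      calc Complex.exp ((ϑ:ℂ)*Complex.I) * z^n
          = ((ρ:ℂ))^n * Complex.exp ((ϑ:ℂ)*Complex.I + (n:ℂ)*((θ:ℂ)*Complex.I)) := by
            rw [hz_def, mul_pow, ← Complex.exp_nat_mul, Complex.exp_add]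
            ring
        _ = ((ρ^n : ℝ):ℂ) * Complex.exp ((((n:ℝ)*θ+ϑ : ℝ):ℂ) * Complex.I) := by
            rw [Complex.ofReal_pow]
            congr 1
            push_cast
            ring
    have h9 : δ * w = ((4*η/m : ℝ):ℂ)
        * (((ρ^n : ℝ):ℂ) * Complex.exp ((((n:ℝ)*θ+ϑ : ℝ):ℂ) * Complex.I)) := by
      rw [← hzn, hδ_def, hw_def]
      have hs2' : ((s:ℂ))^2 = ((4*η/m : ℝ):ℂ) := by
        rw [← Complex.ofReal_pow, hs2]
      calc (s:ℂ) * Complex.exp ((ϑ:ℂ)*Complex.I) * ((s:ℂ) * z^n)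
          = ((s:ℂ))^2 * (Complex.exp ((ϑ:ℂ)*Complex.I) * z^n) := by ring
        _ = ((4*η/m : ℝ):ℂ) * (Complex.exp ((ϑ:ℂ)*Complex.I) * z^n) := by rw [hs2']
    have h10 : (δ*w).re = (4*η/m) * (ρ^n * Real.cos ((n:ℝ)*θ+ϑ)) := by
      rw [h9, Complex.re_ofReal_mul, Complex.re_ofReal_mul, Complex.exp_ofReal_mul_I_re]
    rw [h10]
    field_simp
    ring
  -- assemble
  refine ⟨A, b, c, ?_, ?_, ?_, ?_⟩
  · intro i j
    simp only [hA_def, Matrix.of_apply]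
    exact hlam0 _
  · intro i
    have h1 : ‖(s:ℂ) * zeta m ^ (i:ℕ)‖ = s := by
      rw [norm_mul, Complex.norm_real, habs, mul_one, Real.norm_of_nonneg hs0]
    have h2 := Complex.abs_re_le_norm ((s:ℂ) * zeta m ^ (i:ℕ))
    rw [h1] at h2
    have h3 := (abs_le.mp h2).1
    simp only [hb_def]
    linarith
  · intro i
    have h1 : ‖δ * (starRingEnd ℂ) (zeta m ^ (i:ℕ))‖ = s := by
      rw [norm_mul, habsδ, Complex.norm_conj, habs, mul_one]
    have h2 := Complex.abs_re_le_norm (δ * (starRingEnd ℂ) (zeta m ^ (i:ℕ)))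
    rw [h1] at h2
    have h3 := (abs_le.mp h2).1
    simp only [hc_def]
    linarith
  · intro k hk
    rw [ht k hk, hpow (k-1), hdot (k-1)]
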